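/- arXiv:2603.07713 — 2 statements merged into one kernel-verified Lean document; each statement's English description precedes it below -/
import Mathlib

section
/- Let F be a semiflow with strong compact dynamics on a metric space (X,d), and let M and N be nodes (the Conley nodes and the shadow nodes coincide for such F). Then M ≽_C N if and only if M ≽_S N; that is, the Conley chain graph Γ_C and the shadow chain graph Γ_S have the same nodes and the same edges, so Γ_C = Γ_S. -/
open Set Metric Filter

variable {X : Type*} [MetricSpace X]

/-- A (continuous-time) semiflow on a metric space `X`: a continuous map
`[0,∞) × X → X` with `F 0 = id` and `F (t+s) = F t ∘ F s`. -/
structure IsSemiflow (F : ℝ → X → X) : Prop where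
  cont : ContinuousOn (fun p : ℝ × X => F p.1 p.2) (Set.Ici 0 ×ˢ Set.univ)
  map_zero : ∀ x : X, F 0 x = x
  map_add : ∀ t s : ℝ, 0 ≤ t → 0 ≤ s → ∀ x : X, F (t + s) x = F t (F s x)

/-- An `(ε,T)`-chain (Conley chain) from `x` to `y`: finitely many points
`x = c 0, …, c N = y` (with `N ≥ 1`) and times `t i ≥ T` such that
`d(F^{t i}(c i), c (i+1)) < ε`. -/
def ConleyChain (F : ℝ → X → X) (ε T : ℝ) (x y : X) : Prop :=
  ∃ (N : ℕ) (c : ℕ → X) (t : ℕ → ℝ), 1 ≤ N ∧ c 0 = x ∧ c N = y ∧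
    ∀ i < N, T ≤ t i ∧ dist (F (t i) (c i)) (c (i + 1)) < ε

/-- `x ≽_C y`: for every `ε > 0` and `T > 0` there is an `(ε,T)`-chain from `x` to `y`. -/
def ConleyLe (F : ℝ → X → X) (x y : X) : Prop :=
  ∀ ε > (0:ℝ), ∀ T > (0:ℝ), ConleyChain F ε T x y

/-- `γ : [0,T] → X` is piecewise continuous: continuous except at finitely many
points, with one-sided limits at every point. -/
def PiecewiseContinuousOn (γ : ℝ → X) (T : ℝ) : Prop :=
  (∃ S : Finset ℝ, ∀ t ∈ Set.Icc (0:ℝ) T, t ∉ S → ContinuousWithinAt γ (Set.Icc 0 T) t) ∧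
  (∀ t ∈ Set.Ioc (0:ℝ) T, ∃ L : X, Filter.Tendsto γ (nhdsWithin t (Set.Iio t)) (nhds L)) ∧
  (∀ t ∈ Set.Ico (0:ℝ) T, ∃ L : X, Filter.Tendsto γ (nhdsWithin t (Set.Ioi t)) (nhds L))

/-- `γ : [0,T] → X` is `ε`-close to the orbits of `F`:
`d(γ(t+τ), F^τ(γ t)) < ε` for every `τ ∈ [0,1]` and `t ∈ [0, T-τ]`. -/
def EpsCloseTo (F : ℝ → X → X) (ε T : ℝ) (γ : ℝ → X) : Prop :=
  ∀ τ ∈ Set.Icc (0:ℝ) 1, ∀ t ∈ Set.Icc (0:ℝ) (T - τ), dist (γ (t + τ)) (F τ (γ t)) < ε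

/-- An `ε`-chain (shadow chain) from `x` to `y`: a piecewise continuous curve
`γ : [0,T] → X`, `T ≥ 1`, with `γ 0 = x`, `γ T = y`, which is `ε`-close to `F`. -/
def IsShadowChain (F : ℝ → X → X) (ε T : ℝ) (γ : ℝ → X) (x y : X) : Prop :=
  1 ≤ T ∧ PiecewiseContinuousOn γ T ∧ γ 0 = x ∧ γ T = y ∧ EpsCloseTo F ε T γ

/-- `x ≽_S y`: for every `ε > 0` there is an `ε`-chain (shadow chain) from `x` to `y`. -/
def ShadowLe (F : ℝ → X → X) (x y : X) : Prop :=
  ∀ ε > (0:ℝ), ∃ (T : ℝ) (γ : ℝ → X), IsShadowChain F ε T γ x y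

/-- Conley chain-recurrent points. -/
def RC (F : ℝ → X → X) : Set X :=
  {x | (∀ t ≥ (0:ℝ), F t x = x) ∨ ∃ y, ConleyLe F x y ∧ ConleyLe F y x}

/-- Shadow chain-recurrent points. -/
def RS (F : ℝ → X → X) : Set X :=
  {x | (∀ t ≥ (0:ℝ), F t x = x) ∨ ∃ y, ShadowLe F x y ∧ ShadowLe F y x}

/-- A Conley node: a maximal set of mutually Conley chain-equivalent points. -/
def IsConleyNode (F : ℝ → X → X) (M : Set X) : Prop :=
  (∀ x ∈ M, ∀ y ∈ M, ConleyLe F x y ∧ ConleyLe F y x) ∧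
  ∀ M' : Set X, M ⊆ M' → (∀ x ∈ M', ∀ y ∈ M', ConleyLe F x y ∧ ConleyLe F y x) → M' = M

/-- A shadow node: a maximal set of mutually shadow chain-equivalent points. -/
def IsShadowNode (F : ℝ → X → X) (M : Set X) : Prop :=
  (∀ x ∈ M, ∀ y ∈ M, ShadowLe F x y ∧ ShadowLe F y x) ∧
  ∀ M' : Set X, M ⊆ M' → (∀ x ∈ M', ∀ y ∈ M', ShadowLe F x y ∧ ShadowLe F y x) → M' = M

/-- `G` attracts `K` under `F`: for every `ε > 0`, eventually `F^t(K) ⊆ N_ε(G)`. -/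
def Attracts (F : ℝ → X → X) (G K : Set X) : Prop :=
  ∀ ε > (0:ℝ), ∃ T > (0:ℝ), ∀ t ≥ T, F t '' K ⊆ Metric.thickening ε G

/-- `W_ε(G) = ⋃_{t ≥ 0} F^t (N_ε(G))`. -/
def Wset (F : ℝ → X → X) (ε : ℝ) (G : Set X) : Set X :=
  ⋃ t ∈ Set.Ici (0:ℝ), F t '' Metric.thickening ε G

/-- `G` is the global attractor of `F`: a maximal invariant compact set
attracting every compact set. -/
def IsGlobalAttractor (F : ℝ → X → X) (G : Set X) : Prop :=
  IsCompact G ∧ (∀ t ≥ (0:ℝ), F t '' G = G) ∧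
  (∀ K : Set X, IsCompact K → Attracts F G K) ∧
  (∀ G' : Set X, IsCompact G' → (∀ t ≥ (0:ℝ), F t '' G' = G') → G' ⊆ G)

/-- `G` is a strong global attractor of `F`: moreover, for some `ε > 0`, `G`
attracts `N_ε(G)` and `F` is uniformly continuous on `[0,1] × W_ε(G)`. -/
def IsStrongGlobalAttractor (F : ℝ → X → X) (G : Set X) : Prop :=
  IsGlobalAttractor F G ∧ ∃ ε > (0:ℝ), Attracts F G (Metric.thickening ε G) ∧
    UniformContinuousOn (fun p : ℝ × X => F p.1 p.2) (Set.Icc (0:ℝ) 1 ×ˢ Wset F ε G)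

section AuxHelpers

variable {F : ℝ → X → X} {G : Set X}

lemma thick_subset_wset (hF : IsSemiflow F) (ε : ℝ) :
    Metric.thickening ε G ⊆ Wset F ε G := by
  intro z hz
  rw [Wset, Set.mem_iUnion₂]
  exact ⟨0, Set.self_mem_Ici, z, hz, hF.map_zero z⟩

lemma wset_forward (hF : IsSemiflow F) {ε s : ℝ} (hs : 0 ≤ s) {z : X}
    (hz : z ∈ Wset F ε G) : F s z ∈ Wset F ε G := by
  rw [Wset, Set.mem_iUnion₂] at hz ⊢
  obtain ⟨t, ht, w, hw, rfl⟩ := hz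
  have ht' : (0:ℝ) ≤ t := ht
  exact ⟨s + t, Set.mem_Ici.mpr (by linarith), w, hw, hF.map_add s t hs ht' w⟩

lemma mem_thickening_of_close {z w : X} {α β η : ℝ} (h : dist z w < α)
    (hw : w ∈ Metric.thickening β G) (hle : α + β ≤ η) :
    z ∈ Metric.thickening η G := by
  rw [Metric.mem_thickening_iff] at hw ⊢
  obtain ⟨g, hg, hwg⟩ := hw
  exact ⟨g, hg, by have := dist_triangle z w g; linarith⟩

lemma mem_attractor_flow {z : X} (hinv : ∀ t ≥ (0:ℝ), F t '' G = G) {t : ℝ}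
    (ht : 0 ≤ t) (hz : z ∈ G) : F t z ∈ G := by
  have h := hinv t ht
  rw [← h]
  exact ⟨z, hz, rfl⟩

lemma uc_modulus {ε : ℝ} (hU : UniformContinuousOn (fun p : ℝ × X => F p.1 p.2)
    (Set.Icc (0:ℝ) 1 ×ˢ Wset F ε G)) :
    ∀ α > (0:ℝ), ∃ β > (0:ℝ), ∀ u ∈ Set.Icc (0:ℝ) 1, ∀ z ∈ Wset F ε G,
      ∀ w ∈ Wset F ε G, dist z w < β → dist (F u z) (F u w) < α := by
  intro α hα
  rw [Metric.uniformContinuousOn_iff] at hU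
  obtain ⟨β, hβ, h⟩ := hU α hα
  refine ⟨β, hβ, fun u hu z hz w hw hd => ?_⟩
  exact h (u, z) ⟨hu, hz⟩ (u, w) ⟨hu, hw⟩
    (by simpa [Prod.dist_eq, dist_self, sup_eq_right.mpr dist_nonneg] using hd)

/-- A point Conley chain-equivalent to itself lies in the global attractor. -/
lemma conley_self_mem_attractor (hF : IsSemiflow F)
    (hGcl : IsClosed G) (hattrK : ∀ K : Set X, IsCompact K → Attracts F G K)
    {ε₀ : ℝ} (hε₀ : 0 < ε₀) (hA : Attracts F G (Metric.thickening ε₀ G))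
    {x : X} (hx : ConleyLe F x x) : x ∈ G := by
  rw [← hGcl.closure_eq, Metric.mem_closure_iff]
  intro η hη
  set η' := min η ε₀ with hη'def
  have hη'pos : 0 < η' := lt_min hη hε₀
  have hη'ε₀ : η' ≤ ε₀ := min_le_right _ _
  obtain ⟨Tx, hTxpos, hTx⟩ := hattrK {x} isCompact_singleton (η'/2) (by linarith)
  obtain ⟨T1, hT1pos, hT1⟩ := hA (η'/2) (by linarith)
  obtain ⟨N, c, t, hN, hc0, hcN, hstep⟩ := hx (η'/2) (by linarith) (max Tx T1)
    (lt_of_lt_of_le hTxpos (le_max_left _ _))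
  have key : ∀ i, 1 ≤ i → i ≤ N → c i ∈ Metric.thickening η' G := by
    intro i h1 h2
    induction i with
    | zero => omega
    | succ i ih =>
      have hiN : i < N := by omega
      obtain ⟨hti, hdi⟩ := hstep i hiN
      have himg : F (t i) (c i) ∈ Metric.thickening (η'/2) G := by
        rcases Nat.eq_zero_or_pos i with h0 | hpos
        · subst h0
          exact hTx (t 0) (le_trans (le_max_left _ _) hti) ⟨c 0, by simp [hc0], rfl⟩
        · have hci : c i ∈ Metric.thickening ε₀ G :=
            Metric.thickening_mono hη'ε₀ G (ih hpos (by omega))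
          exact hT1 (t i) (le_trans (le_max_right _ _) hti) ⟨c i, hci, rfl⟩
      exact mem_thickening_of_close (by rwa [dist_comm] at hdi) himg (by linarith)
  have hxth := key N hN le_rfl
  rw [hcN, Metric.mem_thickening_iff] at hxth
  obtain ⟨g, hg, hd⟩ := hxth
  exact ⟨g, hg, lt_of_lt_of_le hd (min_le_left _ _)⟩

lemma conleyChain_trans {ε T : ℝ} {x y z : X} (h1 : ConleyChain F ε T x y)
    (h2 : ConleyChain F ε T y z) : ConleyChain F ε T x z := by
  obtain ⟨N₁, c₁, t₁, hN₁, h10, h1N, h1s⟩ := h1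
  obtain ⟨N₂, c₂, t₂, hN₂, h20, h2N, h2s⟩ := h2
  refine ⟨N₁ + N₂, fun i => if i < N₁ then c₁ i else c₂ (i - N₁),
    fun i => if i < N₁ then t₁ i else t₂ (i - N₁), by omega, ?_, ?_, ?_⟩
  · simp only [if_pos (by omega : 0 < N₁)]; exact h10
  · have h : ¬ (N₁ + N₂ < N₁) := by omega
    simp only [if_neg h, Nat.add_sub_cancel_left]; exact h2N
  · intro i hi
    by_cases hlt : i < N₁
    · refine ⟨by simp only [if_pos hlt]; exact (h1s i hlt).1, ?_⟩
      simp only [if_pos hlt]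
      by_cases hlt1 : i + 1 < N₁
      · simp only [if_pos hlt1]; exact (h1s i hlt).2
      · have hieq : i + 1 = N₁ := by omega
        have hnlt : ¬ (i + 1 < N₁) := by omega
        rw [if_neg hnlt]
        have h0' : i + 1 - N₁ = 0 := by omega
        rw [h0', h20, ← h1N, ← hieq]
        exact (h1s i hlt).2
    · have hiN : N₁ ≤ i := by omega
      have h1' : ¬ (i + 1 < N₁) := by omega
      refine ⟨by simp only [if_neg hlt]; exact (h2s (i - N₁) (by omega)).1, ?_⟩
      simp only [if_neg hlt, if_neg h1']
      have : i + 1 - N₁ = (i - N₁) + 1 := by omega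
      rw [this]
      exact (h2s (i - N₁) (by omega)).2

lemma conleyChain_flow_start (hF : IsSemiflow F) {y : X} (hyy : ConleyLe F y y)
    {ε T E : ℝ} (hε : 0 < ε) (hT : 0 < T) (hE : 0 ≤ E) :
    ConleyChain F ε T (F E y) y := by
  obtain ⟨N, c, t, hN, hc0, hcN, hstep⟩ := hyy ε hε (T + E) (by linarith)
  refine ⟨N, fun i => match i with | 0 => F E y | (j+1) => c (j+1),
    fun i => match i with | 0 => t 0 - E | (j+1) => t (j+1), hN, rfl, ?_, ?_⟩
  · match N, hN with
    | (n+1), _ => exact hcN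
  · intro i hi
    match i with
    | 0 =>
      obtain ⟨ht0, hd0⟩ := hstep 0 hi
      refine ⟨show T ≤ t 0 - E by linarith, ?_⟩
      have heq : F (t 0) y = F (t 0 - E) (F E y) := by
        have h := hF.map_add (t 0 - E) E (by linarith) hE y
        rw [show t 0 - E + E = t 0 from by ring] at h
        exact h
      show dist (F (t 0 - E) (F E y)) (c 1) < ε
      rw [← heq, ← hc0]
      exact hd0
    | (j+1) =>
      obtain ⟨hti, hdi⟩ := hstep (j+1) hi
      refine ⟨show T ≤ t (j+1) by linarith, ?_⟩
      show dist (F (t (j+1)) (c (j+1))) (c (j+2)) < ε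
      exact hdi

end AuxHelpers
section DeltaStar

variable {F : ℝ → X → X} {G : Set X}

/-- Uniform Lyapunov stability near the attractor: there is `δ > 0` such that the
forward orbit of the `δ`-thickening of `G` stays in the `ε₀/2`-thickening. -/
lemma exists_deltastar (hF : IsSemiflow F) {ε₀ : ℝ} (hε₀ : 0 < ε₀)
    (hGinv : ∀ t ≥ (0:ℝ), F t '' G = G)
    (hA : Attracts F G (Metric.thickening ε₀ G))
    (hUC : ∀ α > (0:ℝ), ∃ β > (0:ℝ), ∀ u ∈ Set.Icc (0:ℝ) 1, ∀ z ∈ Wset F ε₀ G,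
      ∀ w ∈ Wset F ε₀ G, dist z w < β → dist (F u z) (F u w) < α) :
    ∃ δ > (0:ℝ), δ ≤ ε₀/2 ∧
      ∀ z ∈ Metric.thickening δ G, ∀ t ≥ (0:ℝ), F t z ∈ Metric.thickening (ε₀/2) G := by
  -- total modulus function
  have hUC' : ∀ α : ℝ, ∃ β : ℝ, 0 < β ∧ (0 < α → ∀ u ∈ Set.Icc (0:ℝ) 1,
      ∀ z ∈ Wset F ε₀ G, ∀ w ∈ Wset F ε₀ G, dist z w < β → dist (F u z) (F u w) < α) := by
    intro α
    by_cases hα : 0 < α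
    · obtain ⟨β, hβ, h⟩ := hUC α hα
      exact ⟨β, hβ, fun _ => h⟩
    · exact ⟨1, one_pos, fun h => absurd h hα⟩
  choose B hBpos hB using hUC'
  obtain ⟨T0, hT0pos, hT0⟩ := hA (ε₀/4) (by linarith)
  set n0 := ⌈T0⌉₊ with hn0
  obtain ⟨ν, hν0, hνs⟩ : ∃ ν : ℕ → ℝ, ν 0 = ε₀/4 ∧
      ∀ k, ν (k+1) = min (B (ν k)) (min (ν k) (ε₀/4)) :=
    ⟨fun k => Nat.rec (ε₀/4) (fun _ p => min (B p) (min p (ε₀/4))) k, rfl, fun _ => rfl⟩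
  have hνpos : ∀ k, 0 < ν k := by
    intro k
    induction k with
    | zero => rw [hν0]; linarith
    | succ k ih => rw [hνs]; exact lt_min (hBpos _) (lt_min ih (by linarith))
  have hνle : ∀ k, ν k ≤ ε₀/4 := by
    intro k
    cases k with
    | zero => rw [hν0]
    | succ k => rw [hνs]; exact (min_le_right _ _).trans (min_le_right _ _)
  -- main claim
  have claim : ∀ k : ℕ, ∀ z g : X, g ∈ G → dist z g < ν k →
      ∀ t : ℝ, 0 ≤ t → t ≤ k → F t z ∈ Metric.thickening (ε₀/2) G := by
    intro k
    induction k with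
    | zero =>
      intro z g hg hd t ht0 ht1
      have ht : t = 0 := le_antisymm (by exact_mod_cast ht1) ht0
      subst ht
      rw [hF.map_zero]
      exact Metric.mem_thickening_iff.mpr ⟨g, hg, by have := hνle 0; linarith⟩
    | succ k ih =>
      intro z g hg hd t ht0 ht1
      have hdk : dist z g < ν k := lt_of_lt_of_le hd (by rw [hνs]; exact (min_le_right _ _).trans (min_le_left _ _))
      have hzW : z ∈ Wset F ε₀ G := thick_subset_wset hF ε₀
        (Metric.mem_thickening_iff.mpr ⟨g, hg, by have := hνle (k+1); linarith⟩)
      have hgW : g ∈ Wset F ε₀ G := thick_subset_wset hF ε₀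
        (Metric.self_subset_thickening hε₀ G hg)
      by_cases ht : t ≤ 1
      · have hdB : dist z g < B (ν k) := lt_of_lt_of_le hd (by rw [hνs]; exact min_le_left _ _)
        have := hB (ν k) (hνpos k) t ⟨ht0, ht⟩ z hzW g hgW hdB
        have hFg : F t g ∈ G := mem_attractor_flow hGinv ht0 hg
        exact Metric.mem_thickening_iff.mpr ⟨F t g, hFg, by have := hνle k; linarith⟩
      · push_neg at ht
        have hdB : dist z g < B (ν k) := lt_of_lt_of_le hd (by rw [hνs]; exact min_le_left _ _)
        have h1 : dist (F 1 z) (F 1 g) < ν k :=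
          hB (ν k) (hνpos k) 1 ⟨zero_le_one, le_rfl⟩ z hzW g hgW hdB
        have hg1 : F 1 g ∈ G := mem_attractor_flow hGinv zero_le_one hg
        have := ih (F 1 z) (F 1 g) hg1 h1 (t - 1) (by linarith)
          (by push_cast at ht1 ⊢; linarith)
        rwa [← hF.map_add (t-1) 1 (by linarith) zero_le_one z,
          show t - 1 + 1 = t from by ring] at this
  refine ⟨ν n0, hνpos n0, (hνle n0).trans (by linarith), ?_⟩
  intro z hz t ht
  by_cases htn : t ≤ n0
  · rw [Metric.mem_thickening_iff] at hz
    obtain ⟨g, hg, hd⟩ := hz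
    exact claim n0 z g hg hd t ht htn
  · push_neg at htn
    have hT0n : T0 ≤ (n0:ℝ) := Nat.le_ceil T0
    have hzε : z ∈ Metric.thickening ε₀ G :=
      Metric.thickening_mono (by have := hνle n0; linarith) G hz
    have := hT0 t (by linarith) ⟨z, hzε, rfl⟩
    exact Metric.thickening_mono (by linarith) G this
end DeltaStar
section C2S

variable {F : ℝ → X → X} {G : Set X}

lemma conley_to_shadow (hF : IsSemiflow F) {ε₀ : ℝ} (hε₀ : 0 < ε₀)
    (hA : Attracts F G (Metric.thickening ε₀ G))
    (hUC : ∀ α > (0:ℝ), ∃ β > (0:ℝ), ∀ u ∈ Set.Icc (0:ℝ) 1, ∀ z ∈ Wset F ε₀ G,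
      ∀ w ∈ Wset F ε₀ G, dist z w < β → dist (F u z) (F u w) < α)
    {x y : X} (hxG : x ∈ G) (hxy : ConleyLe F x y) : ShadowLe F x y := by
  classical
  intro ε' hε'
  obtain ⟨β, hβpos, hβ⟩ := hUC ε' hε'
  obtain ⟨T0, hT0pos, hT0⟩ := hA (ε₀/2) (by linarith)
  set δc := min β (min (ε₀/2) ε') with hδcdef
  have hδcpos : 0 < δc := lt_min hβpos (lt_min (by linarith) hε')
  have hδcβ : δc ≤ β := min_le_left _ _
  have hδcε₀ : δc ≤ ε₀/2 := (min_le_right _ _).trans (min_le_left _ _)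
  have hδcε' : δc ≤ ε' := (min_le_right _ _).trans (min_le_right _ _)
  obtain ⟨N, c, t, hN, hc0, hcN, hstep⟩ := hxy δc hδcpos (max T0 1)
    (lt_of_lt_of_le hT0pos (le_max_left _ _))
  have htime : ∀ i < N, (1:ℝ) ≤ t i ∧ T0 ≤ t i := fun i hi =>
    ⟨(le_max_right _ _).trans (hstep i hi).1, (le_max_left _ _).trans (hstep i hi).1⟩
  -- partial sums
  set a : ℕ → ℝ := fun i => ∑ j ∈ Finset.range i, t j with hadef
  have ha0 : a 0 = 0 := Finset.sum_range_zero t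
  have hasucc : ∀ i, a (i+1) = a i + t i := fun i => Finset.sum_range_succ t i
  have ha_lt : ∀ i j, i < j → j ≤ N → a i < a j := by
    intro i j hij hjN
    induction j with
    | zero => omega
    | succ j ih =>
      have h1 : (1:ℝ) ≤ t j := (htime j (by omega)).1
      rcases Nat.lt_or_ge i j with h | h
      · have := ih h (by omega)
        rw [hasucc]; linarith
      · have hieq : i = j := by omega
        subst hieq
        rw [hasucc]; linarith
  have ha_le : ∀ i j, i ≤ j → j ≤ N → a i ≤ a j := by
    intro i j hij hjN
    rcases Nat.lt_or_ge i j with h | h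
    · exact (ha_lt i j h hjN).le
    · have : i = j := by omega
      subst this; exact le_rfl
  have ha_nonneg : ∀ i, i ≤ N → 0 ≤ a i := fun i hi => ha0 ▸ ha_le 0 i (by omega) hi
  have haN1 : 1 ≤ a N := by
    have := ha_le 1 N hN le_rfl
    rw [hasucc 0, ha0] at this
    have h1 := (htime 0 (by omega)).1
    linarith
  -- chain points stay near the attractor
  have hci : ∀ i, i ≤ N → c i ∈ Metric.thickening ε₀ G := by
    intro i hi
    induction i with
    | zero => rw [hc0]; exact Metric.self_subset_thickening hε₀ G hxG
    | succ i ih =>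
      have hiN : i < N := by omega
      have himg : F (t i) (c i) ∈ Metric.thickening (ε₀/2) G :=
        hT0 (t i) (htime i hiN).2 ⟨c i, ih (by omega), rfl⟩
      exact mem_thickening_of_close (by rw [dist_comm]; exact (hstep i hiN).2) himg
        (by linarith)
  have himgW : ∀ i < N, F (t i) (c i) ∈ Wset F ε₀ G := fun i hi =>
    thick_subset_wset hF ε₀ (Metric.thickening_mono (by linarith) G
      (hT0 (t i) (htime i hi).2 ⟨c i, hci i hi.le, rfl⟩))
  -- the index function
  set idx : ℝ → ℕ := fun s => Nat.findGreatest (fun i => a i ≤ s) N with hidxdef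
  have hidx₁ : ∀ s, 0 ≤ s → s < a N → idx s < N ∧ a (idx s) ≤ s ∧ s < a (idx s + 1) := by
    intro s hs hsN
    have hP0 : a 0 ≤ s := by rw [ha0]; exact hs
    have hspec : a (idx s) ≤ s := Nat.findGreatest_spec (P := fun i => a i ≤ s) (Nat.zero_le N) hP0
    have hle : idx s ≤ N := Nat.findGreatest_le N
    have hlt : idx s < N := by
      rcases Nat.lt_or_ge (idx s) N with h | h
      · exact h
      · have : idx s = N := by omega
        rw [this] at hspec; linarith
    refine ⟨hlt, hspec, ?_⟩
    by_contra h
    push_neg at h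
    exact Nat.findGreatest_is_greatest (P := fun i => a i ≤ s) (n := N) (k := idx s + 1) (Nat.lt_succ_self _) (by omega) h
  have hidx_eq : ∀ i, i < N → ∀ s, a i ≤ s → s < a (i+1) → idx s = i := by
    intro i hiN s hais hsa
    have hs0 : 0 ≤ s := le_trans (ha_nonneg i hiN.le) hais
    have hge : i ≤ idx s := Nat.le_findGreatest hiN.le hais
    have hle : idx s ≤ i := by
      by_contra h
      push_neg at h
      have hP0 : a 0 ≤ s := by rw [ha0]; exact hs0
      have hspec : a (idx s) ≤ s := Nat.findGreatest_spec (P := fun i => a i ≤ s) (Nat.zero_le N) hP0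
      have : a (i+1) ≤ a (idx s) := ha_le (i+1) (idx s) (by omega) (Nat.findGreatest_le N)
      linarith
    omega
  -- the curve
  set γ : ℝ → X := fun s => if s < a N then F (s - a (idx s)) (c (idx s)) else c N
    with hγdef
  have hγ_formula : ∀ i, i < N → ∀ s, a i ≤ s → s < a (i+1) → γ s = F (s - a i) (c i) := by
    intro i hiN s hais hsa
    have hsN : s < a N := lt_of_lt_of_le hsa (ha_le (i+1) N hiN le_rfl)
    rw [hγdef]
    simp only [if_pos hsN, hidx_eq i hiN s hais hsa]
  have hγ0 : γ 0 = x := by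
    have h01 : (0:ℝ) < a (0+1) := by
      rw [hasucc 0, ha0]; linarith [(htime 0 (by omega)).1]
    rw [hγ_formula 0 (by omega) 0 ha0.le h01, ha0, sub_zero, hF.map_zero, hc0]
  have hγN : γ (a N) = y := by
    rw [hγdef]; simp only [if_neg (lt_irrefl (a N))]; exact hcN
  refine ⟨a N, γ, haN1, ?_, hγ0, hγN, ?_⟩
  · -- piecewise continuity
    refine ⟨⟨(Finset.range (N+1)).image a, ?_⟩, ?_, ?_⟩
    · -- continuity off the jump times
      intro s hs hsS
      have hne : ∀ i, i ≤ N → s ≠ a i := by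
        intro i hi heq
        exact hsS (Finset.mem_image.mpr ⟨i, Finset.mem_range.mpr (by omega), heq.symm⟩)
      have hsN : s < a N := lt_of_le_of_ne hs.2 (hne N le_rfl)
      have hs0 : 0 ≤ s := hs.1
      obtain ⟨hiN, hais, hsa⟩ := hidx₁ s hs0 hsN
      set i := idx s
      have hais' : a i < s := lt_of_le_of_ne hais (fun h => hne i hiN.le h.symm)
      have hev : γ =ᶠ[nhds s] (fun u => F (u - a i) (c i)) := by
        filter_upwards [Ioo_mem_nhds hais' hsa] with u hu
        exact hγ_formula i hiN u hu.1.le hu.2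
      have hφ : Continuous fun u : ℝ => ((u - a i, c i) : ℝ × X) := by
        exact (continuous_id.sub continuous_const).prodMk continuous_const
      have h2 : ContinuousAt (fun p : ℝ × X => F p.1 p.2) (s - a i, c i) :=
        hF.cont.continuousAt (prod_mem_nhds (Ici_mem_nhds (by linarith)) Filter.univ_mem)
      have hflow : ContinuousAt (fun u : ℝ => F (u - a i) (c i)) s :=
        h2.tendsto.comp hφ.continuousAt
      exact (hflow.congr hev.symm).continuousWithinAt
    · -- left limits
      intro s hs
      obtain ⟨i, hiN, hais, hsa⟩ : ∃ i, i < N ∧ a i < s ∧ s ≤ a (i+1) := by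
        by_cases hex : ∃ j, j ≤ N ∧ a j = s
        · obtain ⟨j, hjN, hja⟩ := hex
          have hj1 : 1 ≤ j := by
            by_contra h
            have : j = 0 := by omega
            rw [this, ha0] at hja
            exact absurd hja.symm (ne_of_gt hs.1)
          refine ⟨j - 1, by omega, ?_, ?_⟩
          · rw [← hja]; exact ha_lt (j-1) j (by omega) hjN
          · rw [show j - 1 + 1 = j from by omega, hja]
        · push_neg at hex
          have hsN : s < a N := lt_of_le_of_ne hs.2 (fun h => hex N le_rfl h.symm)
          obtain ⟨hiN, hais, hsa⟩ := hidx₁ s hs.1.le hsN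
          exact ⟨idx s, hiN, lt_of_le_of_ne hais (fun h => hex (idx s) hiN.le h), hsa.le⟩
      refine ⟨F (s - a i) (c i), ?_⟩
      have hev : γ =ᶠ[nhdsWithin s (Set.Iio s)] (fun u => F (u - a i) (c i)) := by
        filter_upwards [Ioo_mem_nhdsLT_of_mem (Set.mem_Ioc.mpr ⟨hais, le_refl s⟩)] with u hu
        exact hγ_formula i hiN u hu.1.le (lt_of_lt_of_le hu.2 hsa)
      have hφ : Continuous fun u : ℝ => ((u - a i, c i) : ℝ × X) :=
        (continuous_id.sub continuous_const).prodMk continuous_const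
      have h2 : ContinuousAt (fun p : ℝ × X => F p.1 p.2) (s - a i, c i) :=
        hF.cont.continuousAt (prod_mem_nhds (Ici_mem_nhds (by linarith)) Filter.univ_mem)
      have hflow : ContinuousAt (fun u : ℝ => F (u - a i) (c i)) s :=
        h2.tendsto.comp hφ.continuousAt
      exact Filter.Tendsto.congr' hev.symm (hflow.tendsto.mono_left nhdsWithin_le_nhds)
    · -- right limits
      intro s hs
      obtain ⟨hiN, hais, hsa⟩ := hidx₁ s hs.1 hs.2
      set i := idx s
      refine ⟨F (s - a i) (c i), ?_⟩
      have hev : γ =ᶠ[nhdsWithin s (Set.Ioi s)] (fun u => F (u - a i) (c i)) := by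
        filter_upwards [Ioo_mem_nhdsGT_of_mem (Set.mem_Ico.mpr ⟨le_refl s, hsa⟩)] with u hu
        exact hγ_formula i hiN u (hais.trans hu.1.le) hu.2
      have hφ : Continuous fun u : ℝ => ((u - a i, c i) : ℝ × X) :=
        (continuous_id.sub continuous_const).prodMk continuous_const
      have hcw : ContinuousWithinAt (fun p : ℝ × X => F p.1 p.2)
          (Set.Ici 0 ×ˢ Set.univ) (s - a i, c i) :=
        hF.cont _ ⟨Set.mem_Ici.mpr (show (0:ℝ) ≤ s - a i by linarith), Set.mem_univ _⟩
      have hmap : Set.MapsTo (fun u : ℝ => ((u - a i, c i) : ℝ × X))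
          (Set.Ioi s) (Set.Ici 0 ×ˢ Set.univ) := by
        intro u hu
        have hsu : s < u := hu
        exact ⟨Set.mem_Ici.mpr (show (0:ℝ) ≤ u - a i by linarith), Set.mem_univ _⟩
      have hcwγ : ContinuousWithinAt ((fun p : ℝ × X => F p.1 p.2) ∘
          (fun u : ℝ => ((u - a i, c i) : ℝ × X))) (Set.Ioi s) s :=
        ContinuousWithinAt.comp hcw hφ.continuousWithinAt hmap
      exact Filter.Tendsto.congr' hev.symm hcwγ
  · -- ε'-closeness
    intro τ hτ s hs
    obtain ⟨hτ0, hτ1⟩ := hτ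
    obtain ⟨hs0, hsT⟩ := hs
    by_cases hsN : a N ≤ s
    · have hτz : τ = 0 := le_antisymm (by linarith) hτ0
      subst hτz
      rw [add_zero, hF.map_zero, dist_self]
      exact hε'
    · push_neg at hsN
      obtain ⟨hiN, hais, hsa⟩ := hidx₁ s hs0 hsN
      set i := idx s
      have hγs : γ s = F (s - a i) (c i) := hγ_formula i hiN s hais hsa
      by_cases hcase : s + τ < a (i+1)
      · -- same segment
        have hγst : γ (s + τ) = F (s + τ - a i) (c i) :=
          hγ_formula i hiN (s + τ) (by linarith) hcase
        rw [hγst, hγs, ← hF.map_add τ (s - a i) hτ0 (by linarith),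
          show τ + (s - a i) = s + τ - a i from by ring, dist_self]
        exact hε'
      · push_neg at hcase
        have hjump : dist (F (t i) (c i)) (c (i+1)) < δc := (hstep i hiN).2
        set v := s + τ - a (i+1) with hvdef
        have hv0 : 0 ≤ v := by simp only [hvdef]; linarith
        have hv1 : v < 1 := by
          have : s < a (i+1) := hsa
          simp only [hvdef]; linarith
        have hFτγs : F τ (γ s) = F v (F (t i) (c i)) := by
          rw [hγs, ← hF.map_add τ (s - a i) hτ0 (by linarith)]
          have h1 : τ + (s - a i) = v + t i := by
            rw [hvdef, hasucc i]; ring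
          rw [h1, hF.map_add v (t i) hv0 (by linarith [(htime i hiN).1])]
        by_cases hBsub : s + τ < a N
        · -- lands in the interior of segment i+1
          have hi1N : i + 1 < N := by
            rcases Nat.lt_or_ge (i+1) N with h | h
            · exact h
            · have : i + 1 = N := by omega
              rw [this] at hcase
              linarith
          have hlt2 : s + τ < a (i+2) := by
            have h1 : (1:ℝ) ≤ t (i+1) := (htime (i+1) hi1N).1
            have := hasucc (i+1)
            linarith
          have hγst : γ (s + τ) = F v (c (i+1)) := by
            have := hγ_formula (i+1) hi1N (s + τ) hcase hlt2
            rw [this]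
          rw [hγst, hFτγs]
          exact hβ v ⟨hv0, hv1.le⟩ (c (i+1))
            (thick_subset_wset hF ε₀ (hci (i+1) hi1N.le)) (F (t i) (c i))
            (himgW i hiN)
            (lt_of_lt_of_le (by rw [dist_comm]; exact hjump) hδcβ)
        · -- lands exactly at the endpoint
          push_neg at hBsub
          have hend : s + τ = a N := le_antisymm (by linarith) hBsub
          have hi1 : i + 1 = N := by
            by_contra h
            have h2 : i + 1 < N := by omega
            have h3 : a (i+1+1) ≤ a N := ha_le (i+2) N (by omega) le_rfl
            have h4 : (1:ℝ) ≤ t (i+1) := (htime (i+1) h2).1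
            have h5 := hasucc (i+1)
            have : s < a (i+1) := hsa
            linarith
          have hγst : γ (s + τ) = c N := by
            rw [hend, hγN, hcN]
          have hveq : v = 0 := by
            simp only [hvdef, hend, hi1]; ring
          have hjump' : dist (F (t i) (c i)) (c N) < δc := by rw [← hi1]; exact hjump
          rw [hγst, hFτγs, hveq, hF.map_zero, dist_comm]
          exact lt_of_lt_of_le hjump' hδcε'
end C2S
section S2C

variable {F : ℝ → X → X} {G : Set X}

lemma shadow_to_conley (hF : IsSemiflow F) {ε₀ : ℝ} (hε₀ : 0 < ε₀)
    (hGinv : ∀ t ≥ (0:ℝ), F t '' G = G)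
    (hA : Attracts F G (Metric.thickening ε₀ G))
    (hUC : ∀ α > (0:ℝ), ∃ β > (0:ℝ), ∀ u ∈ Set.Icc (0:ℝ) 1, ∀ z ∈ Wset F ε₀ G,
      ∀ w ∈ Wset F ε₀ G, dist z w < β → dist (F u z) (F u w) < α)
    {x y : X} (hxG : x ∈ G) (hyG : y ∈ G) (hyy : ConleyLe F y y)
    (hxy : ShadowLe F x y) : ConleyLe F x y := by
  classical
  obtain ⟨δ, hδpos, hδle, hδstar⟩ := exists_deltastar hF hε₀ hGinv hA hUC
  -- a total modulus function
  have hUC' : ∀ α : ℝ, ∃ β : ℝ, 0 < β ∧ (0 < α → ∀ u ∈ Set.Icc (0:ℝ) 1,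
      ∀ z ∈ Wset F ε₀ G, ∀ w ∈ Wset F ε₀ G, dist z w < β → dist (F u z) (F u w) < α) := by
    intro α
    by_cases hα : 0 < α
    · obtain ⟨β, hβ, h⟩ := hUC α hα
      exact ⟨β, hβ, fun _ => h⟩
    · exact ⟨1, one_pos, fun h => absurd h hα⟩
  choose B hBpos hB using hUC'
  intro ε hε T hT
  obtain ⟨T1, hT1pos, hT1⟩ := hA (δ/2) (by linarith)
  set m : ℕ := max 1 ⌈max T T1⌉₊ with hmdef
  have hm1 : 1 ≤ m := le_max_left _ _
  have hmR : (1:ℝ) ≤ (m:ℝ) := by exact_mod_cast hm1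
  have hmRpos : (0:ℝ) < (m:ℝ) := by linarith
  have hceilm : (⌈max T T1⌉₊:ℝ) ≤ (m:ℝ) := by
    exact_mod_cast Nat.le_max_right 1 ⌈max T T1⌉₊
  have hmT : T ≤ (m:ℝ) := by
    have h1 : max T T1 ≤ (⌈max T T1⌉₊:ℝ) := Nat.le_ceil _
    linarith [le_max_left T T1]
  have hmT1 : T1 ≤ (m:ℝ) := by
    have h1 : max T T1 ≤ (⌈max T T1⌉₊:ℝ) := Nat.le_ceil _
    linarith [le_max_right T T1]
  -- the modulus sequence
  obtain ⟨μ, hμ0, hμs⟩ : ∃ μ : ℕ → ℝ, μ 0 = min ε (min (δ/2) (ε₀/2)) ∧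
      ∀ k, μ (k+1) = min (B (μ k / 2)) (μ k / 2) :=
    ⟨fun k => Nat.rec (min ε (min (δ/2) (ε₀/2))) (fun _ p => min (B (p/2)) (p/2)) k,
      rfl, fun _ => rfl⟩
  have hμpos : ∀ k, 0 < μ k := by
    intro k
    induction k with
    | zero => rw [hμ0]; exact lt_min hε (lt_min (by linarith) (by linarith))
    | succ k ih => rw [hμs]; exact lt_min (hBpos _) (by linarith)
  have hμhalf : ∀ k, μ (k+1) ≤ μ k / 2 := fun k => by rw [hμs]; exact min_le_right _ _
  have hμanti : Antitone μ :=
    antitone_nat_of_succ_le (fun k => le_trans (hμhalf k) (by linarith [hμpos k]))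
  have hμ0ε : μ 0 ≤ ε := by rw [hμ0]; exact min_le_left _ _
  have hμ0δ : μ 0 ≤ δ/2 := by rw [hμ0]; exact (min_le_right _ _).trans (min_le_left _ _)
  have hμ0ε₀ : μ 0 ≤ ε₀/2 := by rw [hμ0]; exact (min_le_right _ _).trans (min_le_right _ _)
  have hμpush : ∀ k : ℕ, ∀ u : ℝ, u ∈ Set.Icc (0:ℝ) 1 → ∀ z ∈ Wset F ε₀ G,
      ∀ w ∈ Wset F ε₀ G, dist z w < μ (k+1) → dist (F u z) (F u w) < μ k / 2 := by
    intro k u hu z hz w hw hd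
    exact hB (μ k / 2) (by linarith [hμpos k]) u hu z hz w hw
      (lt_of_lt_of_le hd (by rw [hμs k]; exact min_le_left _ _))
  -- the shadow chain
  obtain ⟨Tγ, γ, hTγ1, hPW, hγ0, hγT, hclose⟩ := hxy (μ (2*m+2)) (hμpos _)
  have hTγpos : (0:ℝ) < Tγ := by linarith
  -- PUSH: propagating closeness along the flow inside W
  have PUSH : ∀ k : ℕ, ∀ i : ℕ, ∀ z w : X,
      (∀ t : ℝ, 0 ≤ t → F t z ∈ Wset F ε₀ G) →
      (∀ t : ℝ, 0 ≤ t → F t w ∈ Wset F ε₀ G) →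
      dist z w < μ (i + k + 1) → ∀ τ : ℝ, τ ∈ Set.Icc (0:ℝ) 1 →
      dist (F ((k:ℝ) + τ) z) (F ((k:ℝ) + τ) w) < μ i := by
    intro k
    induction k with
    | zero =>
      intro i z w hz hw hd τ hτ
      have hzW : z ∈ Wset F ε₀ G := by have := hz 0 le_rfl; rwa [hF.map_zero] at this
      have hwW : w ∈ Wset F ε₀ G := by have := hw 0 le_rfl; rwa [hF.map_zero] at this
      have hd' : dist z w < μ (i + 1) := by
        have h : i + 0 + 1 = i + 1 := by omega
        rwa [h] at hd
      have h := hμpush i τ hτ z hzW w hwW hd'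
      have h0 : ((0:ℕ):ℝ) + τ = τ := by norm_num
      rw [h0]
      linarith [hμpos i]
    | succ k ih =>
      intro i z w hz hw hd τ hτ
      have hzW : z ∈ Wset F ε₀ G := by have := hz 0 le_rfl; rwa [hF.map_zero] at this
      have hwW : w ∈ Wset F ε₀ G := by have := hw 0 le_rfl; rwa [hF.map_zero] at this
      have hd2 : dist z w < μ ((i + k + 1) + 1) := by
        have h : i + (k+1) + 1 = (i + k + 1) + 1 := by omega
        rwa [h] at hd
      have h1 : dist (F 1 z) (F 1 w) < μ (i + k + 1) := by
        have h := hμpush (i+k+1) 1 ⟨zero_le_one, le_rfl⟩ z hzW w hwW hd2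
        linarith [hμpos (i+k+1)]
      have hz1 : ∀ t : ℝ, 0 ≤ t → F t (F 1 z) ∈ Wset F ε₀ G := by
        intro t ht
        rw [← hF.map_add t 1 ht zero_le_one]
        exact hz (t+1) (by linarith)
      have hw1 : ∀ t : ℝ, 0 ≤ t → F t (F 1 w) ∈ Wset F ε₀ G := by
        intro t ht
        rw [← hF.map_add t 1 ht zero_le_one]
        exact hw (t+1) (by linarith)
      have hres := ih i (F 1 z) (F 1 w) hz1 hw1 h1 τ hτ
      have hk0 : (0:ℝ) ≤ (k:ℝ) + τ := by
        have := hτ.1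
        have := Nat.cast_nonneg (α := ℝ) k
        linarith
      have harith : ((k+1:ℕ):ℝ) + τ = ((k:ℝ) + τ) + 1 := by push_cast; ring
      rw [harith, hF.map_add ((k:ℝ) + τ) 1 hk0 zero_le_one z,
        hF.map_add ((k:ℝ) + τ) 1 hk0 zero_le_one w]
      exact hres
  -- TRACK: the curve tracks true orbits started on it
  have TRACK : ∀ k : ℕ, k ≤ 2*m → ∀ s : ℝ, 0 ≤ s → γ s ∈ Metric.thickening δ G →
      ∀ τ : ℝ, τ ∈ Set.Icc (0:ℝ) 1 → s + ((k:ℝ) + τ) ≤ Tγ →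
      dist (γ (s + ((k:ℝ) + τ))) (F ((k:ℝ) + τ) (γ s)) < μ (2*m + 1 - k) := by
    intro k
    induction k with
    | zero =>
      intro _ s hs0 hsδ τ hτ hle
      have h0 : ((0:ℕ):ℝ) + τ = τ := by norm_num
      rw [h0] at hle ⊢
      have h := hclose τ hτ s ⟨hs0, by linarith⟩
      exact lt_of_lt_of_le h (hμanti (by omega : 2*m+1 ≤ 2*m+2))
    | succ k ih =>
      intro hk s hs0 hsδ τ hτ hle
      have hk' : k ≤ 2*m := by omega
      have hτ0 := hτ.1
      have hτ1 := hτ.2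
      have hkR : (0:ℝ) ≤ (k:ℝ) := Nat.cast_nonneg k
      have harith : ((k+1:ℕ):ℝ) + τ = ((k:ℝ) + τ) + 1 := by push_cast; ring
      rw [harith] at hle ⊢
      have hle' : s + ((k:ℝ) + τ) ≤ Tγ := by linarith
      have hIH := ih hk' s hs0 hsδ τ hτ hle'
      have hidxeq : 2*m + 1 - k = (2*m - k) + 1 := by omega
      rw [hidxeq] at hIH
      have horb : F ((k:ℝ) + τ) (γ s) ∈ Metric.thickening (ε₀/2) G :=
        hδstar (γ s) hsδ ((k:ℝ) + τ) (by linarith)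
      have horbW : F ((k:ℝ) + τ) (γ s) ∈ Wset F ε₀ G :=
        thick_subset_wset hF ε₀ (Metric.thickening_mono (by linarith) G horb)
      have hμb : μ ((2*m - k) + 1) ≤ ε₀/2 := le_trans (hμanti (Nat.zero_le _)) hμ0ε₀
      have hγuW : γ (s + ((k:ℝ) + τ)) ∈ Wset F ε₀ G :=
        thick_subset_wset hF ε₀ (mem_thickening_of_close hIH horb (by linarith))
      have hstep1 : dist (γ ((s + ((k:ℝ) + τ)) + 1)) (F 1 (γ (s + ((k:ℝ) + τ)))) <
          μ (2*m+2) :=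
        hclose 1 ⟨zero_le_one, le_rfl⟩ (s + ((k:ℝ) + τ)) ⟨by linarith, by linarith⟩
      have hpush : dist (F 1 (γ (s + ((k:ℝ) + τ)))) (F 1 (F ((k:ℝ) + τ) (γ s))) <
          μ (2*m - k) / 2 :=
        hμpush (2*m - k) 1 ⟨zero_le_one, le_rfl⟩ _ hγuW _ horbW hIH
      have hsplit : F (((k:ℝ) + τ) + 1) (γ s) = F 1 (F ((k:ℝ) + τ) (γ s)) := by
        rw [show ((k:ℝ) + τ) + 1 = 1 + ((k:ℝ) + τ) from by ring]
        exact hF.map_add 1 ((k:ℝ) + τ) zero_le_one (by linarith) (γ s)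
      have hargeq : s + (((k:ℝ) + τ) + 1) = (s + ((k:ℝ) + τ)) + 1 := by ring
      rw [hargeq, hsplit, show 2*m+1-(k+1) = 2*m - k from by omega]
      have hμ22 : μ (2*m+2) ≤ μ (2*m - k) / 2 := by
        have h1 : μ (2*m+2) ≤ μ ((2*m - k) + 1) := hμanti (by omega)
        have h2 := hμhalf (2*m - k)
        linarith
      calc dist (γ ((s + ((k:ℝ) + τ)) + 1)) (F 1 (F ((k:ℝ) + τ) (γ s)))
          ≤ dist (γ ((s + ((k:ℝ) + τ)) + 1)) (F 1 (γ (s + ((k:ℝ) + τ)))) +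
            dist (F 1 (γ (s + ((k:ℝ) + τ)))) (F 1 (F ((k:ℝ) + τ) (γ s))) :=
          dist_triangle _ _ _
        _ < μ (2*m+2) + μ (2*m - k) / 2 := add_lt_add hstep1 hpush
        _ ≤ μ (2*m - k) / 2 + μ (2*m - k) / 2 := by linarith
        _ = μ (2*m - k) := by ring
  -- STEP: one block of length m
  have STEP : ∀ j : ℕ, ((j:ℝ) + 1) * m ≤ Tγ → γ ((j:ℝ) * m) ∈ Metric.thickening δ G →
      dist (γ (((j:ℝ) + 1) * m)) (F (m:ℝ) (γ ((j:ℝ) * m))) < μ (m+2) := by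
    intro j hle hδj
    have hcast : ((m - 1 : ℕ):ℝ) + 1 = (m:ℝ) := by
      rw [Nat.cast_sub hm1]; push_cast; ring
    have hs0 : 0 ≤ (j:ℝ) * m := mul_nonneg (Nat.cast_nonneg j) (by linarith)
    have hexp : ((j:ℝ) + 1) * m = (j:ℝ) * m + m := by ring
    have hble : (j:ℝ) * m + (((m - 1 : ℕ):ℝ) + 1) ≤ Tγ := by
      rw [hcast]; linarith
    have h := TRACK (m-1) (by omega) ((j:ℝ) * m) hs0 hδj 1 ⟨zero_le_one, le_rfl⟩ hble
    rw [hcast] at h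
    rw [show 2*m+1-(m-1) = m+2 from by omega] at h
    rw [show (j:ℝ) * m + (m:ℝ) = ((j:ℝ) + 1) * m from by ring] at h
    exact h
  -- ANCHOR: the curve returns close to G at multiples of m
  have ANCHOR : ∀ j : ℕ, (j:ℝ) * m ≤ Tγ → γ ((j:ℝ) * m) ∈ Metric.thickening δ G := by
    intro j
    induction j with
    | zero =>
      intro _
      rw [show ((0:ℕ):ℝ) * m = 0 from by norm_num, hγ0]
      exact Metric.self_subset_thickening hδpos G hxG
    | succ j ih =>
      intro hle
      have hcast1 : ((j+1:ℕ):ℝ) = (j:ℝ) + 1 := by push_cast; ring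
      rw [hcast1] at hle ⊢
      have hexp : ((j:ℝ) + 1) * m = (j:ℝ) * m + m := by ring
      have hjle : (j:ℝ) * m ≤ Tγ := by
        have hj0 : 0 ≤ (j:ℝ) * m := mul_nonneg (Nat.cast_nonneg j) (by linarith)
        linarith
      have hδj := ih hjle
      have hstep := STEP j hle hδj
      have himg : F (m:ℝ) (γ ((j:ℝ) * m)) ∈ Metric.thickening (δ/2) G :=
        hT1 (m:ℝ) hmT1 ⟨γ ((j:ℝ) * m), Metric.thickening_mono (by linarith) G hδj, rfl⟩
      have hμm2 : μ (m+2) ≤ δ/2 := le_trans (hμanti (Nat.zero_le _)) hμ0δ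
      exact mem_thickening_of_close hstep himg (by linarith)
  -- assembly
  set K := ⌈Tγ / (m:ℝ)⌉₊ with hKdef
  have hKpos : 0 < K := Nat.ceil_pos.mpr (div_pos hTγpos hmRpos)
  have hK1 : 1 ≤ K := hKpos
  have hKR : (1:ℝ) ≤ (K:ℝ) := by exact_mod_cast hK1
  have hKup : Tγ ≤ (K:ℝ) * m := by
    have h := Nat.le_ceil (Tγ / (m:ℝ))
    rw [div_le_iff₀ hmRpos] at h
    exact h
  have hscast : ((K - 1 : ℕ):ℝ) = (K:ℝ) - 1 := by
    rw [Nat.cast_sub hK1]; norm_num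
  have hKlowN : ((K - 1 : ℕ):ℝ) * m < Tγ := by
    have h1 : (K - 1 : ℕ) < K := by omega
    have h2 : ((K - 1 : ℕ):ℝ) < Tγ / (m:ℝ) := Nat.lt_ceil.mp (by rw [← hKdef]; exact h1)
    rw [lt_div_iff₀ hmRpos] at h2
    exact h2
  set s := ((K - 1 : ℕ):ℝ) * m with hsdef
  set E := (K:ℝ) * m - Tγ with hEdef
  set r := Tγ - s with hrdef
  have hsm : s + (m:ℝ) = (K:ℝ) * m := by rw [hsdef, hscast]; ring
  have hE0 : 0 ≤ E := by rw [hEdef]; linarith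
  have hEm : E < m := by rw [hEdef]; linarith [hKlowN]
  have hr0 : 0 < r := by rw [hrdef]; linarith [hKlowN]
  have hrm : r ≤ (m:ℝ) := by rw [hrdef]; linarith
  have hs0 : 0 ≤ s := by
    rw [hsdef]; exact mul_nonneg (Nat.cast_nonneg _) (by linarith)
  have hsδ : γ s ∈ Metric.thickening δ G := by
    rw [hsdef]
    exact ANCHOR (K-1) (by rw [← hsdef]; exact hKlowN.le)
  -- the fractional last block
  set n' := ⌈r⌉₊ with hn'def
  have hn'pos : 0 < n' := Nat.ceil_pos.mpr hr0
  have hn'1 : 1 ≤ n' := hn'pos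
  have hk'cast : ((n' - 1 : ℕ):ℝ) = (n':ℝ) - 1 := by rw [Nat.cast_sub hn'1]; norm_num
  set τ' := r - ((n' - 1 : ℕ):ℝ) with hτ'def
  have hτ'pos : 0 < τ' := by
    have h := Nat.ceil_lt_add_one hr0.le
    rw [hτ'def, hk'cast]
    rw [hn'def]
    linarith
  have hτ'le : τ' ≤ 1 := by
    have h := Nat.le_ceil r
    rw [hτ'def, hk'cast]
    rw [hn'def]
    linarith
  have hn'm : n' ≤ m := by
    rw [hn'def]
    exact Nat.ceil_le.mpr hrm
  have hsum' : ((n' - 1 : ℕ):ℝ) + τ' = r := by rw [hτ'def]; ring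
  have hTr : s + (((n' - 1 : ℕ):ℝ) + τ') = Tγ := by rw [hsum', hrdef]; ring
  have hT2 := TRACK (n' - 1) (by omega) s hs0 hsδ τ' ⟨hτ'pos.le, hτ'le⟩ (le_of_eq hTr)
  rw [hTr, hγT] at hT2
  rw [hsum'] at hT2
  -- hT2 : dist y (F r (γ s)) < μ (2*m + 1 - (n' - 1))
  set kE := ⌊E⌋₊ with hkEdef
  have hkE_le : ((kE:ℕ):ℝ) ≤ E := Nat.floor_le hE0
  have hkE_lt : E < (kE:ℝ) + 1 := Nat.lt_floor_add_one E
  have hkEm : kE < m := by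
    rw [hkEdef]
    exact (Nat.floor_lt hE0).mpr hEm
  set τE := E - (kE:ℝ) with hτEdef
  have hτE0 : 0 ≤ τE := by rw [hτEdef]; linarith
  have hτE1 : τE ≤ 1 := by rw [hτEdef]; linarith
  have hdist_init : dist (F r (γ s)) y < μ (1 + kE + 1) := by
    rw [dist_comm]
    refine lt_of_lt_of_le hT2 (hμanti ?_)
    omega
  have hzorb : ∀ t : ℝ, 0 ≤ t → F t (F r (γ s)) ∈ Wset F ε₀ G := by
    intro t ht
    rw [← hF.map_add t r ht hr0.le]
    exact thick_subset_wset hF ε₀ (Metric.thickening_mono (by linarith) G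
      (hδstar (γ s) hsδ (t + r) (by linarith)))
  have hworb : ∀ t : ℝ, 0 ≤ t → F t y ∈ Wset F ε₀ G := fun t ht =>
    thick_subset_wset hF ε₀ (Metric.self_subset_thickening hε₀ G
      (mem_attractor_flow hGinv ht hyG))
  have hP := PUSH kE 1 (F r (γ s)) y hzorb hworb hdist_init τE ⟨hτE0, hτE1⟩
  have hEeq : (kE:ℝ) + τE = E := by rw [hτEdef]; ring
  rw [hEeq] at hP
  have hm_split : F (m:ℝ) (γ s) = F E (F r (γ s)) := by
    rw [← hF.map_add E r hE0 hr0.le]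
    have : E + r = (m:ℝ) := by rw [hEdef, hrdef]; linarith [hsm]
    rw [this]
  have hlast : dist (F (m:ℝ) (γ s)) (F E y) < μ 1 := by
    rw [hm_split]
    exact hP
  -- build the Conley chain
  refine conleyChain_trans ?_ (conleyChain_flow_start hF hyy hε hT hE0)
  refine ⟨K, fun j => if j < K then γ ((j:ℝ) * m) else F E y, fun _ => (m:ℝ),
    hK1, ?_, ?_, ?_⟩
  · show (if 0 < K then γ (((0:ℕ):ℝ) * m) else F E y) = x
    rw [if_pos hKpos, show ((0:ℕ):ℝ) * m = 0 from by norm_num, hγ0]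
  · show (if K < K then γ (((K:ℕ):ℝ) * m) else F E y) = F E y
    rw [if_neg (lt_irrefl K)]
  · intro j hj
    refine ⟨hmT, ?_⟩
    show dist (F (m:ℝ) (if j < K then γ ((j:ℝ) * m) else F E y))
      (if j + 1 < K then γ (((j+1:ℕ):ℝ) * m) else F E y) < ε
    rw [if_pos hj]
    by_cases hjK : j + 1 < K
    · rw [if_pos hjK]
      have hcast1 : ((j+1:ℕ):ℝ) = (j:ℝ) + 1 := by push_cast; ring
      have hexp : ((j:ℝ) + 1) * m = (j:ℝ) * m + m := by ring
      have hle2 : ((j:ℝ) + 1) * m ≤ Tγ := by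
        have h1 : ((j:ℝ) + 1) ≤ (K:ℝ) - 1 := by
          have hn : (j + 1 : ℕ) ≤ K - 1 := by omega
          have h2 : ((j + 1 : ℕ):ℝ) ≤ ((K - 1 : ℕ):ℝ) := by exact_mod_cast hn
          rw [hscast] at h2
          rw [← hcast1]
          exact h2
        have h2 : ((j:ℝ) + 1) * m ≤ ((K:ℝ) - 1) * m :=
          mul_le_mul_of_nonneg_right h1 (by linarith)
        have h3 : ((K:ℝ) - 1) * m < Tγ := by rw [← hscast]; exact hKlowN
        linarith
      have hδj : γ ((j:ℝ) * m) ∈ Metric.thickening δ G := by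
        apply ANCHOR j
        have hj0 : 0 ≤ (j:ℝ) * m := mul_nonneg (Nat.cast_nonneg _) (by linarith)
        linarith
      have hst := STEP j hle2 hδj
      rw [hcast1, dist_comm]
      exact lt_of_lt_of_le hst (le_trans (hμanti (Nat.zero_le _)) hμ0ε)
    · rw [if_neg (by omega : ¬ (j + 1 < K))]
      have hjeq : (j:ℝ) * m = s := by
        have : j = K - 1 := by omega
        rw [this, hsdef]
      rw [hjeq]
      exact lt_of_lt_of_le hlast (le_trans (hμanti (Nat.zero_le _)) hμ0ε)
end S2C
/-- for a semiflow with strong compact dynamics and nodes `M, N`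
(Conley nodes and shadow nodes coincide), `M ≽_C N ↔ M ≽_S N`:
the chain graphs `Γ_C` and `Γ_S` have the same nodes and the same edges. -/
theorem conley_edge_iff_shadow_edge (F : ℝ → X → X) (hF : IsSemiflow F) (G : Set X)
    (hG : IsStrongGlobalAttractor F G) {M N : Set X}
    (hMc : IsConleyNode F M) (hMs : IsShadowNode F M)
    (hNc : IsConleyNode F N) (hNs : IsShadowNode F N) :
    (∃ x ∈ M, ∃ y ∈ N, ConleyLe F x y) ↔ (∃ x ∈ M, ∃ y ∈ N, ShadowLe F x y) := by
  obtain ⟨⟨hGcomp, hGinv, hattrK, _hmax⟩, ε₀, hε₀, hA, hU⟩ := hG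
  have hUC := uc_modulus (F := F) (G := G) (ε := ε₀) hU
  constructor
  · rintro ⟨x, hx, y, hy, hxy⟩
    have hxx : ConleyLe F x x := (hMc.1 x hx x hx).1
    have hxG : x ∈ G := conley_self_mem_attractor hF hGcomp.isClosed hattrK hε₀ hA hxx
    exact ⟨x, hx, y, hy, conley_to_shadow hF hε₀ hA hUC hxG hxy⟩
  · rintro ⟨x, hx, y, hy, hxy⟩
    have hxx : ConleyLe F x x := (hMc.1 x hx x hx).1
    have hyy : ConleyLe F y y := (hNc.1 y hy y hy).1
    have hxG : x ∈ G := conley_self_mem_attractor hF hGcomp.isClosed hattrK hε₀ hA hxx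
    have hyG : y ∈ G := conley_self_mem_attractor hF hGcomp.isClosed hattrK hε₀ hA hyy
    exact ⟨x, hx, y, hy, shadow_to_conley hF hε₀ hGinv hA hUC hxG hyG hyy hxy⟩
end

section
/- Let (X,d) be a locally compact metric space and let F be a semiflow on X with compact dynamics, i.e. F has a global attractor 𝒢. Then F has strong compact dynamics: there exists ε > 0 such that 𝒢 attracts N_ε(𝒢) and the map (t,z) ↦ F^t(z) is uniformly continuous on [0,1] × W_ε(𝒢). -/
open Set Metric Filter

variable {X : Type*} [MetricSpace X]

/-- on a locally compact metric space, every semiflow with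
compact dynamics has strong compact dynamics. -/
theorem strong_compact_dynamics_of_locallyCompact [LocallyCompactSpace X]
    (F : ℝ → X → X) (hF : IsSemiflow F) (G : Set X) (hG : IsGlobalAttractor F G) :
    ∃ ε > (0:ℝ), Attracts F G (Metric.thickening ε G) ∧
      UniformContinuousOn (fun p : ℝ × X => F p.1 p.2)
        (Set.Icc (0:ℝ) 1 ×ˢ Wset F ε G) := by
  obtain ⟨ε, εpos, hKcomp⟩ := hG.1.exists_isCompact_cthickening
  set K : Set X := Metric.cthickening ε G with hK
  have hthick : Metric.thickening ε G ⊆ K := Metric.thickening_subset_cthickening _ _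
  have hAttrK : Attracts F G K := hG.2.2.1 K hKcomp
  have hAttr : Attracts F G (Metric.thickening ε G) := by
    intro δ δpos
    obtain ⟨T, Tpos, hT⟩ := hAttrK δ δpos
    exact ⟨T, Tpos, fun t ht => (Set.image_mono hthick).trans (hT t ht)⟩
  refine ⟨ε, εpos, hAttr, ?_⟩
  obtain ⟨T, Tpos, hT⟩ := hAttrK ε εpos
  set C : Set X := (fun p : ℝ × X => F p.1 p.2) '' (Set.Icc 0 T ×ˢ K) ∪ K with hC
  have hsub : Set.Icc (0:ℝ) T ×ˢ K ⊆ Set.Ici 0 ×ˢ (Set.univ : Set X) := fun p hp =>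
    ⟨hp.1.1, trivial⟩
  have hCcomp : IsCompact C := by
    refine IsCompact.union ?_ hKcomp
    exact ((isCompact_Icc.prod hKcomp).image_of_continuousOn (hF.cont.mono hsub))
  have hW : Wset F ε G ⊆ C := by
    intro x hx
    simp only [Wset, Set.mem_iUnion] at hx
    obtain ⟨t, ht, y, hy, rfl⟩ := hx
    rcases le_or_gt t T with htT | htT
    · exact Or.inl ⟨(t, y), ⟨⟨ht, htT⟩, hthick hy⟩, rfl⟩
    · exact Or.inr (hthick (hT t htT.le ⟨y, hthick hy, rfl⟩))
  have hUC : UniformContinuousOn (fun p : ℝ × X => F p.1 p.2) (Set.Icc (0:ℝ) 1 ×ˢ C) := by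
    refine (isCompact_Icc.prod hCcomp).uniformContinuousOn_of_continuous ?_
    exact hF.cont.mono (fun p hp => ⟨hp.1.1, trivial⟩)
  have hmono : Set.Icc (0:ℝ) 1 ×ˢ Wset F ε G ⊆ Set.Icc (0:ℝ) 1 ×ˢ C :=
    Set.prod_mono_right hW
  exact hUC.mono_left (inf_le_inf le_rfl (Filter.principal_mono.2 (Set.prod_mono hmono hmono)))
end
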